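/- arXiv:1703.08934 — 2 statements merged into one kernel-verified Lean document; each statement's English description precedes it below -/
import Mathlib

section
/- The strongly connected components of 𝔹(Γ) map surjectively onto those of Γ under ψ: if x, x' lie in the same strongly connected component of 𝔹(Γ) then ψ(x), ψ(x') lie in the same strongly connected component of Γ; and for every strongly connected component C of Γ there is a strongly connected component of 𝔹(Γ) mapping onto it. -/
/-!
Common setup: multilevel discrete networks (Faure–Kaji, "A circuit-preserving
mapping from multilevel to Boolean dynamics").

A gene `i` takes levels in `{0,...,b i}`, encoded as `Fin (b i + 1)`.
The Boolean case is `b i = 1`.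
-/

namespace GRN

section Generic

variable {ι : Type*} [Fintype ι] [DecidableEq ι] (b : ι → ℕ)

/-- the state space `∏ i {0,…,b i}` -/
abbrev GState := ∀ i : ι, Fin (b i + 1)

/-- L¹ distance between states -/
def dist1 (x x' : GState b) : ℕ := ∑ i, Nat.dist (x i : ℕ) (x' i : ℕ)

/-- edge relation of the asynchronous state transition graph `Γ(f)` -/
def stgEdge (f : GState b → GState b) (x x' : GState b) : Prop :=
  ∃ j : ι, (∀ k, k ≠ j → x' k = x k) ∧
    (((x j : ℕ) < (f x j : ℕ) ∧ (x' j : ℕ) = (x j : ℕ) + 1) ∨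
     ((f x j : ℕ) < (x j : ℕ) ∧ (x' j : ℕ) + 1 = (x j : ℕ)))

/-- a grid graph: every edge joins states at distance one, and there are no
two parallel outward edges at any vertex -/
def IsGridGraph (E : GState b → GState b → Prop) : Prop :=
  (∀ x x', E x x' → dist1 b x x' = 1) ∧
  (∀ (x x' x'' : GState b) (j : ι), E x x' → E x x'' →
    (∀ k, k ≠ j → x' k = x k) → (∀ k, k ≠ j → x'' k = x k) → x' = x'')

/-- asymptotic evolution function: `f i x ∈ {0, x i, b i}` -/
def Asymptotic (f : GState b → GState b) : Prop :=
  ∀ (x : GState b) (i : ι), (f x i : ℕ) = 0 ∨ f x i = x i ∨ (f x i : ℕ) = b i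

/-- stepwise (unitary) evolution function: `|f i x - x i| ≤ 1` -/
def Stepwise (f : GState b → GState b) : Prop :=
  ∀ (x : GState b) (i : ι), (f x i : ℕ) ≤ (x i : ℕ) + 1 ∧ (x i : ℕ) ≤ (f x i : ℕ) + 1

/-- the asymptotic function `f̄` associated with `f` -/
def asym (f : GState b → GState b) : GState b → GState b := fun x i =>
  if (x i : ℕ) < (f x i : ℕ) then Fin.last (b i)
  else if (f x i : ℕ) < (x i : ℕ) then 0 else x i

/-- the stepwise function `f̂` associated with `f` -/
def stepw (f : GState b → GState b) : GState b → GState b := fun x i =>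
  if h : (x i : ℕ) < (f x i : ℕ) then ⟨(x i : ℕ) + 1, Nat.lt_of_le_of_lt h (f x i).isLt⟩
  else if (f x i : ℕ) < (x i : ℕ) then
    ⟨(x i : ℕ) - 1, lt_of_le_of_lt (Nat.sub_le _ _) (x i).isLt⟩
  else x i

/-- `x + e j` (defined when `x j < b j`) -/
def bump (x : GState b) (j : ι) (h : (x j : ℕ) < b j) : GState b :=
  Function.update x j ⟨(x j : ℕ) + 1, Nat.succ_lt_succ h⟩

/-- `x - e j` -/
def drop (x : GState b) (j : ι) : GState b :=
  Function.update x j ⟨(x j : ℕ) - 1, lt_of_le_of_lt (Nat.sub_le _ _) (x j).isLt⟩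

/-- positive edge `j → i` in the local interaction graph `Gf(x)`:
`∂⁺ⱼfᵢ(x) > 0` or `∂⁻ⱼfᵢ(x) > 0` -/
def PosEdge (f : GState b → GState b) (x : GState b) (j i : ι) : Prop :=
  (∃ h : (x j : ℕ) < b j, (f x i : ℕ) < (f (bump b x j h) i : ℕ)) ∨
  (0 < (x j : ℕ) ∧ (f (drop b x j) i : ℕ) < (f x i : ℕ))

/-- negative edge `j → i` in the local interaction graph `Gf(x)` -/
def NegEdge (f : GState b → GState b) (x : GState b) (j i : ι) : Prop :=
  (∃ h : (x j : ℕ) < b j, (f (bump b x j h) i : ℕ) < (f x i : ℕ)) ∨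
  (0 < (x j : ℕ) ∧ (f x i : ℕ) < (f (drop b x j) i : ℕ))

/-- an edge with sign `s` (`true` = negative) -/
def SignedEdge (f : GState b → GState b) (x : GState b) (s : Bool) (j i : ι) : Prop :=
  if s then NegEdge b f x j i else PosEdge b f x j i

/-- a type-1 functional circuit at `x`, negative iff `neg`: a cycle (with
pairwise-distinct vertices) in the local interaction graph `Gf(x)` whose number
of negative edges is odd iff `neg` -/
def HasType1Circuit (f : GState b → GState b) (x : GState b) (neg : Bool) : Prop :=
  ∃ (k : ℕ) (v : Fin (k + 1) → ι) (s : Fin (k + 1) → Bool),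
    Function.Injective v ∧
    (∀ t, SignedEdge b f x (s t) (v t) (v (t + 1))) ∧
    (Odd (Finset.univ.filter fun t => s t = true).card ↔ neg = true)

/-- mutual reachability -/
def InSameSCC (E : GState b → GState b → Prop) (x y : GState b) : Prop :=
  Relation.ReflTransGen E x y ∧ Relation.ReflTransGen E y x

/-- the strongly connected component of `x` -/
def sccOf (E : GState b → GState b → Prop) (x : GState b) : Set (GState b) :=
  {y | InSameSCC b E x y}

/-- attractor: terminal strongly connected set of states -/
def IsAttractor (E : GState b → GState b → Prop) (A : Set (GState b)) : Prop :=
  A.Nonempty ∧ (∀ x ∈ A, ∀ y ∈ A, Relation.ReflTransGen E x y) ∧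
  (∀ x ∈ A, ∀ y, E x y → y ∈ A)

/-- stable state: no outgoing edges -/
def IsStable (E : GState b → GState b → Prop) (x : GState b) : Prop :=
  ∀ y, ¬ E x y

end Generic

section Binarisation

variable {n : ℕ} {m : Fin n → ℕ}

/-- index set of the Boolean state space `𝔹^(m₁+⋯+mₙ)` -/
abbrev BIdx (m : Fin n → ℕ) := Σ i : Fin n, Fin (m i)

/-- all maximal levels equal to 1 -/
abbrev bOne (m : Fin n → ℕ) : BIdx m → ℕ := fun _ => 1

/-- the Boolean state space `𝔹^(m₁+⋯+mₙ)` -/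
abbrev BState (m : Fin n → ℕ) := GState (bOne m)

/-- the surjection `ψ : 𝔹^(m₁+⋯+mₙ) → M`, counting ones in each block -/
def psi (x : BState m) : GState m := fun i =>
  ⟨∑ j : Fin (m i), (x ⟨i, j⟩ : ℕ), Nat.lt_succ_of_le (by
    calc ∑ j : Fin (m i), (x ⟨i, j⟩ : ℕ) ≤ ∑ _j : Fin (m i), 1 :=
          Finset.sum_le_sum (fun j _ => Nat.lt_succ_iff.mp (x ⟨i, j⟩).isLt)
      _ = m i := by simp)⟩

/-- Van Ham's embedding `b₀ : M → 𝔹^(m₁+⋯+mₙ)`: level `k` ↦ `k` ones then zeros -/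
def vanHam (y : GState m) : BState m := fun p =>
  if (p.2 : ℕ) < (y p.1 : ℕ) then 1 else 0

/-- the binarisation `𝔹(f)` of an (asymptotic) evolution function `f` -/
def binf (f : GState m → GState m) : BState m → BState m := fun x p =>
  if (psi x p.1 : ℕ) < (f (psi x) p.1 : ℕ) then 1
  else if (f (psi x) p.1 : ℕ) < (psi x p.1 : ℕ) then 0
  else x p

/-- the binarisation `𝔹(Γ)` of a grid graph over `M`:
edge `x → x'` iff `d(x,x') = 1` and `ψ(x) → ψ(x')` in `Γ` -/
def binGraph (E : GState m → GState m → Prop) : BState m → BState m → Prop :=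
  fun x x' => dist1 (bOne m) x x' = 1 ∧ E (psi x) (psi x')

/-- the action of `𝕊 = ∏ᵢ S_{mᵢ}` on `𝔹^(m₁+⋯+mₙ)` permuting blocks coordinatewise -/
def act (σ : ∀ i : Fin n, Equiv.Perm (Fin (m i))) (x : BState m) : BState m :=
  fun p => x ⟨p.1, σ p.1 p.2⟩

/-- `𝕊`-symmetric Boolean evolution function -/
def SSym (g : BState m → BState m) : Prop :=
  ∀ (σ : ∀ i : Fin n, Equiv.Perm (Fin (m i))) (x : BState m) (p : BIdx m),
    g (act σ x) p = g x ⟨p.1, σ p.1 p.2⟩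

end Binarisation

/-! `ψ` sends edges of `𝔹(Γ)` to edges of `Γ`, hence strongly connected components into strongly
connected components. Conversely an edge `ψ x → y` of `Γ` changes one level by one, so flipping a
suitable bit in that block lifts it to an edge `x → x'` of `𝔹(Γ)` with `ψ x' = y`, and paths lift.
For surjectivity pick `x` in the finite fibre `ψ⁻¹ y` that is maximal for reachability within the
fibre: a cycle `y → z → y` lifts to a path `x → x₁ → x₂` ending in the fibre, maximality gives
`x₂ → x`, so `x₁` is a preimage of `z` in the component of `x`. -/

theorem _root_.Relation.ReflTransGen.exists_lift {α β : Type*} {r : α → α → Prop}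
    {s : β → β → Prop} {f : α → β} (hlift : ∀ a b, s (f a) b → ∃ a', r a a' ∧ f a' = b)
    {a : α} {b : β} (h : Relation.ReflTransGen s (f a) b) :
    ∃ a', Relation.ReflTransGen r a a' ∧ f a' = b := by
  induction h with
  | refl => exact ⟨a, .refl, rfl⟩
  | tail _ hbc ih =>
    obtain ⟨a₁, haa₁, rfl⟩ := ih
    obtain ⟨a₂, ha₁a₂, rfl⟩ := hlift a₁ _ hbc
    exact ⟨a₂, haa₁.tail ha₁a₂, rfl⟩

theorem _root_.Set.Finite.exists_reflTransGen_maximal {α : Type*} (r : α → α → Prop)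
    {s : Set α} (hs : s.Finite) (hne : s.Nonempty) :
    ∃ x ∈ s, ∀ y ∈ s, Relation.ReflTransGen r x y → Relation.ReflTransGen r y x := by
  let : Preorder α :=
    { le := Relation.ReflTransGen r
      le_refl := fun _ => .refl
      le_trans := fun _ _ _ => .trans }
  obtain ⟨x, hx⟩ := hs.exists_maximal hne
  exact ⟨x, hx.prop, fun y hy => hx.2 hy⟩

lemma exists_of_dist1_eq_one {ι : Type*} [Fintype ι] [DecidableEq ι] {b : ι → ℕ}
    {x y : GState b} (h : dist1 b x y = 1) :
    ∃ i, (∀ k, k ≠ i → y k = x k) ∧ Nat.dist (x i) (y i) = 1 := by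
  obtain ⟨i, hi⟩ : ∃ i, Nat.dist (x i) (y i) ≠ 0 := by
    by_contra! hc
    simp [dist1, hc] at h
  have hsum := Finset.add_sum_erase Finset.univ (fun k => Nat.dist (x k) (y k)) (Finset.mem_univ i)
  rw [← dist1, h] at hsum
  refine ⟨i, fun k hk => ?_, by omega⟩
  have hrest : ∑ k ∈ Finset.univ.erase i, Nat.dist (x k) (y k) = 0 := by omega
  exact (Fin.ext (Nat.eq_of_dist_eq_zero
    (Finset.sum_eq_zero_iff.mp hrest k (Finset.mem_erase.mpr ⟨hk, Finset.mem_univ k⟩)))).symm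

section Binarisation

variable {n : ℕ} {m : Fin n → ℕ}

lemma dist1_update (x : BState m) (p : BIdx m) (v : Fin 2) :
    dist1 (bOne m) x (Function.update x p v) = Nat.dist (x p) v := by
  rw [dist1, Finset.sum_eq_single p (fun q _ hq => by rw [Function.update_of_ne hq, Nat.dist_self])
    (fun hp => absurd (Finset.mem_univ p) hp), Function.update_self]

lemma psi_vanHam (y : GState m) : psi (vanHam y) = y := by
  funext i
  ext
  simp [psi, vanHam, apply_ite, Fin.card_filter_val_lt, (y i).is_le]

lemma psi_update_of_ne (x : BState m) {i i' : Fin n} (j : Fin (m i)) (v : Fin 2) (h : i' ≠ i) :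
    psi (Function.update x ⟨i, j⟩ v) i' = psi x i' := by
  ext
  simp [psi, Function.update_of_ne, h]

lemma psi_update_self_add (x : BState m) (i : Fin n) (j : Fin (m i)) (v : Fin 2) :
    (psi (Function.update x ⟨i, j⟩ v) i : ℕ) + x ⟨i, j⟩ = psi x i + v := by
  simp only [psi]
  rw [← Finset.add_sum_erase _ _ (Finset.mem_univ j),
    ← Finset.add_sum_erase _ (fun j' => (x ⟨i, j'⟩ : ℕ)) (Finset.mem_univ j),
    Finset.sum_congr rfl fun j' hj' => by
      rw [Function.update_of_ne (by simpa using Finset.ne_of_mem_erase hj')]]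
  simp only [Function.update_self]
  ring

lemma psi_eq_mul_of_forall_eq (x : BState m) (i : Fin n) (v : Fin 2)
    (h : ∀ j, x ⟨i, j⟩ = v) : (psi x i : ℕ) = v * m i := by
  simp [psi, h, mul_comm]

lemma exists_dist1_eq_one_psi_eq (x : BState m) {y : GState m}
    (h : dist1 m (psi x) y = 1) : ∃ x', dist1 (bOne m) x x' = 1 ∧ psi x' = y := by
  have fin_two_ne : ∀ a v : Fin 2, a ≠ v → (a : ℕ) + v = 1 ∧ Nat.dist a v = 1 := by decide
  obtain ⟨i, hrest, hi⟩ := exists_of_dist1_eq_one h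
  have exists_ne (v : Fin 2) (hv : (psi x i : ℕ) ≠ v * m i) : ∃ j, x ⟨i, j⟩ ≠ v :=
    not_forall.mp (mt (psi_eq_mul_of_forall_eq x i v) hv)
  -- setting the bit `x ⟨i, j⟩` to `v` moves the `i`-th level of `ψ x` to `y i`
  obtain ⟨j, v, hjv, hv⟩ :
      ∃ j, ∃ v : Fin 2, x ⟨i, j⟩ ≠ v ∧ (y i : ℕ) + x ⟨i, j⟩ = psi x i + v := by
    have := (y i).is_le
    unfold Nat.dist at hi
    by_cases hup : (psi x i : ℕ) < y i
    · obtain ⟨j, hj⟩ := exists_ne 1 (by omega)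
      exact ⟨j, 1, hj, by have := (fin_two_ne _ _ hj).1; omega⟩
    · obtain ⟨j, hj⟩ := exists_ne 0 (by omega)
      exact ⟨j, 0, hj, by have := (fin_two_ne _ _ hj).1; omega⟩
  refine ⟨Function.update x ⟨i, j⟩ v, by rw [dist1_update, (fin_two_ne _ _ hjv).2],
    funext fun k => ?_⟩
  by_cases hk : k = i
  · subst hk
    ext
    have := psi_update_self_add x k j v
    omega
  · rw [psi_update_of_ne _ _ _ hk, hrest k hk]

lemma exists_binGraph_psi_eq {E : GState m → GState m → Prop}
    (hE : ∀ y y', E y y' → dist1 m y y' = 1) (x : BState m) {y : GState m} (h : E (psi x) y) :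
    ∃ x', binGraph E x x' ∧ psi x' = y := by
  obtain ⟨x', hd, rfl⟩ := exists_dist1_eq_one_psi_eq x (hE _ _ h)
  exact ⟨x', ⟨hd, h⟩, rfl⟩

lemma reflTransGen_psi_of_binGraph {E : GState m → GState m → Prop} {x x' : BState m}
    (h : Relation.ReflTransGen (binGraph E) x x') : Relation.ReflTransGen E (psi x) (psi x') :=
  h.lift psi fun _ _ hxy => hxy.2

end Binarisation

/-- strongly connected components of `𝔹(Γ)` map surjectively
onto those of `Γ` via `ψ`. -/
theorem scc_surjective
    {n : ℕ} {m : Fin n → ℕ} (E : GState m → GState m → Prop)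
    (hE : IsGridGraph m E) :
    (∀ x x' : BState m, InSameSCC (bOne m) (binGraph E) x x' →
      InSameSCC m E (psi x) (psi x')) ∧
    (∀ y : GState m, ∃ x : BState m,
      psi '' sccOf (bOne m) (binGraph E) x = sccOf m E y) := by
  have lift_path {x : BState m} {z : GState m} (h : Relation.ReflTransGen E (psi x) z) :
      ∃ x', Relation.ReflTransGen (binGraph E) x x' ∧ psi x' = z :=
    h.exists_lift fun x _ => exists_binGraph_psi_eq hE.1 x
  refine ⟨fun x x' h => ⟨reflTransGen_psi_of_binGraph h.1, reflTransGen_psi_of_binGraph h.2⟩,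
    fun y => ?_⟩
  obtain ⟨x, rfl, hx⟩ := (psi ⁻¹' {y}).toFinite.exists_reflTransGen_maximal (binGraph E)
    ⟨vanHam y, psi_vanHam y⟩
  refine ⟨x, Set.Subset.antisymm ?_ fun z hz => ?_⟩
  · rintro _ ⟨x', hx', rfl⟩
    exact ⟨reflTransGen_psi_of_binGraph hx'.1, reflTransGen_psi_of_binGraph hx'.2⟩
  · obtain ⟨x₁, hxx₁, rfl⟩ := lift_path hz.1
    obtain ⟨x₂, hx₁x₂, hx₂⟩ := lift_path hz.2
    exact ⟨x₁, ⟨hxx₁, hx₁x₂.trans (hx x₂ hx₂ (hxx₁.trans hx₁x₂))⟩, rfl⟩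

end GRN
end

section
/- (Regulation preservation, direction 2) Let f be asymptotic on M. If the local interaction graph G𝔹(f)(x) of the binarisation contains a positive (resp. negative) edge (i,j) → (i',j'), then Gf(ψ(x)) contains a positive (resp. negative) edge i → i'. -/
/-!
Common setup: multilevel discrete networks (Faure–Kaji, "A circuit-preserving
mapping from multilevel to Boolean dynamics").

A gene `i` takes levels in `{0,...,b i}`, encoded as `Fin (b i + 1)`.
The Boolean case is `b i = 1`.
-/

namespace GRN

/-!
Every edge `p → p'` of a local interaction graph is witnessed by a unit step `z → z + e_p` having
`x` as one of its ends, and a unit step at `p = (i, j)` of Boolean states is a unit step at `i` of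
their images under `ψ`. Let `c(z) = ψ(z)ᵢ' - z_{p'}` count the ones of `z` in block `i'` outside
`p' = (i', j')`: then `𝔹(f)(z)_{p'} = 1` exactly when `c(z) < fᵢ'(ψ z)`, and `c` grows by zero or
one along the step. Hence a positive edge at `p'` forces `fᵢ'` to increase along the step. For a
negative edge, `fᵢ'` can fail to decrease only if `c` grows, i.e. `p ≠ p'` lie in the same block, and
`fᵢ'` takes the value `c(z) + 1` at both ends. Asymptoticity (`fᵢ' ∈ {0, yᵢ', mᵢ'}`) rules this out:
`z_p = 0` gives `0 < c(z) + 1 < mᵢ'`, so that value would equal both `ψ(z)ᵢ'` and `ψ(z)ᵢ' + 1`.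
-/

section UnitStep

variable {ι : Type*} {b : ι → ℕ}

def IsUnitStep (b : ι → ℕ) (z z' : GState b) (j : ι) : Prop :=
  (z' j : ℕ) = z j + 1 ∧ ∀ k, k ≠ j → z' k = z k

lemma IsUnitStep.lt_bound {z z' : GState b} {j : ι} (hs : IsUnitStep b z z' j) :
    (z j : ℕ) < b j := by
  have := (z' j).isLt
  have := hs.1
  omega

lemma IsUnitStep.le_apply {z z' : GState b} {j : ι} (hs : IsUnitStep b z z' j) (k : ι) :
    (z k : ℕ) ≤ z' k := by
  by_cases hk : k = j
  · subst hk
    have := hs.1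
    omega
  · rw [hs.2 k hk]

lemma Asymptotic.val_cases {f : GState b → GState b} (hf : Asymptotic b f) (y : GState b) (i : ι) :
    (f y i : ℕ) = 0 ∨ (f y i : ℕ) = y i ∨ (f y i : ℕ) = b i := by
  rcases hf y i with h | h | h
  · exact Or.inl h
  · exact Or.inr (Or.inl (congrArg Fin.val h))
  · exact Or.inr (Or.inr h)

variable [DecidableEq ι]

lemma isUnitStep_bump (x : GState b) (j : ι) (h : (x j : ℕ) < b j) :
    IsUnitStep b x (bump b x j h) j :=
  ⟨by simp [bump], fun k hk => by simp [bump, Function.update_of_ne hk]⟩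

lemma isUnitStep_drop (x : GState b) (j : ι) (h : 0 < (x j : ℕ)) :
    IsUnitStep b (drop b x j) x j :=
  ⟨by simp [drop]; omega, fun k hk => by simp [drop, Function.update_of_ne hk]⟩

namespace IsUnitStep

variable {z z' : GState b} {j : ι}

lemma bump_eq (hs : IsUnitStep b z z' j) : bump b z j hs.lt_bound = z' := by
  funext k
  by_cases hk : k = j
  · subst hk
    exact Fin.ext (by simp [bump, hs.1])
  · simp [bump, Function.update_of_ne hk, hs.2 k hk]

lemma drop_eq (hs : IsUnitStep b z z' j) : drop b z' j = z := by
  funext k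
  by_cases hk : k = j
  · subst hk
    exact Fin.ext (by simp [drop, hs.1])
  · simp [drop, Function.update_of_ne hk, hs.2 k hk]

end IsUnitStep

lemma posEdge_iff (f : GState b → GState b) (x : GState b) (j i : ι) :
    PosEdge b f x j i ↔ ∃ z z', IsUnitStep b z z' j ∧ (z = x ∨ z' = x) ∧
      (f z i : ℕ) < f z' i := by
  constructor
  · rintro (⟨h, hlt⟩ | ⟨h, hlt⟩)
    · exact ⟨x, _, isUnitStep_bump x j h, Or.inl rfl, hlt⟩
    · exact ⟨_, x, isUnitStep_drop x j h, Or.inr rfl, hlt⟩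
  · rintro ⟨z, z', hs, rfl | rfl, hlt⟩
    · exact Or.inl ⟨hs.lt_bound, by rwa [hs.bump_eq]⟩
    · exact Or.inr ⟨by have := hs.1; omega, by rwa [hs.drop_eq]⟩

lemma negEdge_iff (f : GState b → GState b) (x : GState b) (j i : ι) :
    NegEdge b f x j i ↔ ∃ z z', IsUnitStep b z z' j ∧ (z = x ∨ z' = x) ∧
      (f z' i : ℕ) < f z i := by
  constructor
  · rintro (⟨h, hlt⟩ | ⟨h, hlt⟩)
    · exact ⟨x, _, isUnitStep_bump x j h, Or.inl rfl, hlt⟩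
    · exact ⟨_, x, isUnitStep_drop x j h, Or.inr rfl, hlt⟩
  · rintro ⟨z, z', hs, rfl | rfl, hlt⟩
    · exact Or.inl ⟨hs.lt_bound, by rwa [hs.bump_eq]⟩
    · exact Or.inr ⟨by have := hs.1; omega, by rwa [hs.drop_eq]⟩

end UnitStep

section Binarisation

variable {n : ℕ} {m : Fin n → ℕ}

lemma BState.val_le_one (z : BState m) (q : BIdx m) : (z q : ℕ) ≤ 1 :=
  Nat.lt_succ_iff.mp (z q).isLt

lemma IsUnitStep.map_psi {z z' : BState m} {p : BIdx m} (hs : IsUnitStep (bOne m) z z' p) :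
    IsUnitStep m (psi z) (psi z') p.1 := by
  obtain ⟨i, j⟩ := p
  have hterm : ∀ k : Fin (m i), (z' ⟨i, k⟩ : ℕ) = z ⟨i, k⟩ + if k = j then 1 else 0 := by
    intro k
    by_cases hk : k = j
    · subst hk
      simpa using hs.1
    · simp [hk, hs.2 ⟨i, k⟩ (by simpa using hk)]
  refine ⟨?_, fun k hk => Fin.ext ?_⟩
  · show ∑ k, (z' ⟨i, k⟩ : ℕ) = ∑ k, (z ⟨i, k⟩ : ℕ) + 1
    simp only [hterm, Finset.sum_add_distrib, Finset.sum_ite_eq', Finset.mem_univ, if_true]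
  · show ∑ l, (z' ⟨k, l⟩ : ℕ) = ∑ l, (z ⟨k, l⟩ : ℕ)
    exact Finset.sum_congr rfl fun l _ => by
      rw [hs.2 ⟨k, l⟩ fun h => hk (congrArg Sigma.fst h)]

lemma val_le_psi (z : BState m) (i : Fin n) (j : Fin (m i)) : (z ⟨i, j⟩ : ℕ) ≤ psi z i :=
  Finset.single_le_sum (f := fun k => (z ⟨i, k⟩ : ℕ)) (fun _ _ => Nat.zero_le _)
    (Finset.mem_univ j)

lemma psi_add_two_le (z : BState m) {i : Fin n} {j j' : Fin (m i)} (hjj' : j ≠ j') :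
    (psi z i : ℕ) + 2 ≤ m i + z ⟨i, j⟩ + z ⟨i, j'⟩ := by
  have hsplit := Finset.sum_add_sum_compl {j, j'} fun k => (z ⟨i, k⟩ : ℕ)
  have hrest : ∑ k ∈ ({j, j'} : Finset (Fin (m i)))ᶜ, (z ⟨i, k⟩ : ℕ) ≤ m i - 2 := by
    calc _ ≤ ∑ _k ∈ ({j, j'} : Finset (Fin (m i)))ᶜ, 1 :=
          Finset.sum_le_sum fun k _ => BState.val_le_one z _
      _ = m i - 2 := by
        rw [Finset.sum_const, smul_eq_mul, mul_one, Finset.card_compl, Finset.card_pair hjj',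
          Fintype.card_fin]
  have htwo : 2 ≤ m i := by simpa [Finset.card_pair hjj'] using Finset.card_le_univ {j, j'}
  rw [Finset.sum_pair hjj'] at hsplit
  simp only [psi]
  omega

lemma binf_eq_one_iff (f : GState m → GState m) (z : BState m) (q : BIdx m) :
    (binf f z q : ℕ) = 1 ↔ (psi z q.1 : ℕ) < f (psi z) q.1 + z q := by
  have := BState.val_le_one z q
  unfold binf
  split_ifs
  · exact iff_of_true rfl (by omega)
  · exact iff_of_false zero_ne_one (by omega)
  · omega

lemma binf_lt_binf_iff (f : GState m → GState m) (z z' : BState m) (q : BIdx m) :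
    (binf f z q : ℕ) < binf f z' q ↔
      (f (psi z) q.1 : ℕ) + z q ≤ psi z q.1 ∧ (psi z' q.1 : ℕ) < f (psi z') q.1 + z' q := by
  have := binf_eq_one_iff f z q
  have := binf_eq_one_iff f z' q
  have := BState.val_le_one (binf f z) q
  have := BState.val_le_one (binf f z') q
  omega

namespace IsUnitStep

variable {z z' : BState m} {p : BIdx m}

lemma psi_add_le (hs : IsUnitStep (bOne m) z z' p) (q : BIdx m) :
    (psi z q.1 : ℕ) + z' q ≤ psi z' q.1 + z q := by
  by_cases hq : q = p
  · subst hq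
    have : (psi z' q.1 : ℕ) = psi z q.1 + 1 := hs.map_psi.1
    have := hs.1
    omega
  · rw [hs.2 q hq]
    exact Nat.add_le_add_right (hs.map_psi.le_apply q.1) _

lemma apply_lt_of_binf_lt (f : GState m → GState m) (hs : IsUnitStep (bOne m) z z' p)
    (q : BIdx m) (h : (binf f z q : ℕ) < binf f z' q) :
    (f (psi z) q.1 : ℕ) < f (psi z') q.1 := by
  have := hs.psi_add_le q
  rw [binf_lt_binf_iff] at h
  omega

lemma apply_lt_of_binf_gt {f : GState m → GState m} (hf : Asymptotic m f)
    (hs : IsUnitStep (bOne m) z z' p) (q : BIdx m) (h : (binf f z' q : ℕ) < binf f z q) :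
    (f (psi z') q.1 : ℕ) < f (psi z) q.1 := by
  rw [binf_lt_binf_iff] at h
  obtain ⟨i, j⟩ := p
  obtain ⟨i', j'⟩ := q
  dsimp only at h ⊢
  by_cases hi : i' = i
  · subst hi
    have hψ : (psi z' i' : ℕ) = psi z i' + 1 := hs.map_psi.1
    have hzj : (z' ⟨i', j⟩ : ℕ) = z ⟨i', j⟩ + 1 := hs.1
    by_cases hj : j' = j
    · subst hj
      omega
    · have hzj' := congrArg Fin.val (hs.2 ⟨i', j'⟩ (by simpa using hj))
      have := psi_add_two_le z hj
      have := BState.val_le_one z' ⟨i', j⟩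
      have := val_le_psi z i' j'
      have := hf.val_cases (psi z) i'
      have := hf.val_cases (psi z') i'
      omega
  · have hψ := congrArg Fin.val (hs.map_psi.2 i' hi)
    have hz := congrArg Fin.val (hs.2 ⟨i', j'⟩ fun h => hi (congrArg Sigma.fst h))
    omega

end IsUnitStep

end Binarisation

/-- regulation preservation, direction 2: a signed edge
`(i,j) → (i',j')` of `G𝔹(f)(x)` projects to a like-signed edge `i → i'` of
`Gf(ψ(x))`. -/
theorem regulation_preserving_backward
    {n : ℕ} {m : Fin n → ℕ} (f : GState m → GState m)
    (hf : Asymptotic m f) (x : BState m) (p p' : BIdx m) (s : Bool)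
    (h : SignedEdge (bOne m) (binf f) x s p p') :
    SignedEdge m f (psi x) s p.1 p'.1 := by
  cases s
  · obtain ⟨z, z', hs, hx, hlt⟩ := (posEdge_iff _ _ _ _).mp h
    exact (posEdge_iff _ _ _ _).mpr ⟨psi z, psi z', hs.map_psi,
      hx.imp (congrArg psi) (congrArg psi), hs.apply_lt_of_binf_lt f p' hlt⟩
  · obtain ⟨z, z', hs, hx, hlt⟩ := (negEdge_iff _ _ _ _).mp h
    exact (negEdge_iff _ _ _ _).mpr ⟨psi z, psi z', hs.map_psi,
      hx.imp (congrArg psi) (congrArg psi), hs.apply_lt_of_binf_gt hf p' hlt⟩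

end GRN
end
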